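/- arXiv:1409.3411 — 5 statements merged into one kernel-verified Lean document; each statement's English description precedes it below -/
import Mathlib

section
/- Let q be a prime power with q > 2 and let a ∈ F_{q^2} be an element of multiplicative order q^2 − 1. Then a^{q+1} ≠ 4. -/
/-- If `q > 2` is a prime power and `a ∈ F_{q^2}` has multiplicative order `q^2 - 1`,
then `a^{q+1} ≠ 4`. -/
theorem stmt_6 (q : ℕ) (hq : IsPrimePow q) (h2 : 2 < q) (F : Type*) [Field F] [Fintype F]
    (hF : Fintype.card F = q ^ 2) (a : F) (ha : orderOf a = q ^ 2 - 1) :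
    a ^ (q + 1) ≠ 4 := by
  intro h4
  have hqpos : 0 < q ^ 2 - 1 :=
    Nat.sub_pos_of_lt (Nat.one_lt_pow two_ne_zero (by omega))
  have hone : a ^ (q ^ 2 - 1) = 1 := by rw [← ha]; exact pow_orderOf_eq_one a
  have ha0 : a ≠ 0 := by
    intro h; rw [h, zero_pow (by omega)] at hone; exact zero_ne_one hone
  have h4ne : (4 : F) ≠ 0 := by
    rw [← h4]; exact pow_ne_zero _ ha0
  -- characteristic
  obtain ⟨p, hchar⟩ := CharP.exists F
  have hp : p.Prime := CharP.char_is_prime F p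
  haveI : Fact p.Prime := ⟨hp⟩
  obtain ⟨n, -, hcard⟩ := FiniteField.card F p
  have hp2 : p ≠ 2 := by
    intro hp2
    subst hp2
    apply h4ne
    have : ((4 : ℕ) : F) = 0 := (CharP.cast_eq_zero_iff F 2 4).2 (by norm_num)
    simpa using this
  have h2ne : (2 : F) ≠ 0 := by
    intro h
    have hd : p ∣ 2 := (CharP.cast_eq_zero_iff F p 2).1 (by simpa using h)
    exact hp2 ((Nat.prime_dvd_prime_iff_eq hp Nat.prime_two).1 hd)
  -- q is a power of p, hence odd
  obtain ⟨r, m, hr, hm, hqrm⟩ := hq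
  have hpq : p ∣ q := by
    have h1 : p ∣ q ^ 2 := by
      rw [← hF, hcard]
      exact dvd_pow_self p (by simp [n.ne_zero])
    exact hp.dvd_of_dvd_pow h1
  have hpr : p = r := by
    have hpr' : p ∣ r ^ m := by rw [hqrm]; exact hpq
    exact (Nat.prime_dvd_prime_iff_eq hp hr.nat_prime).1 (hp.dvd_of_dvd_pow hpr')
  have hqodd : ¬ 2 ∣ q := by
    intro hdvd
    have h2r : (2 : ℕ) ∣ r ^ m := by rw [hqrm]; exact hdvd
    have hr2 : r = 2 :=
      ((Nat.prime_dvd_prime_iff_eq Nat.prime_two hr.nat_prime).1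
        (Nat.prime_two.dvd_of_dvd_pow h2r)).symm
    exact hp2 (hpr.trans hr2)
  obtain ⟨t, ht⟩ : ∃ t, q = 2 * t + 1 := ⟨q / 2, by omega⟩
  -- 2 ^ q = 2 via Frobenius
  have hfrob : ∀ k : ℕ, (2 : F) ^ p ^ k = 2 := by
    intro k
    induction k with
    | zero => simp
    | succ k ih =>
      rw [pow_succ, pow_mul, ih, ← frobenius_def]
      simpa using map_ofNat (frobenius F p) 2
  have h2q : (2 : F) ^ q = 2 := by
    rw [← hqrm, ← hpr]; exact hfrob m
  have h2q1 : (2 : F) ^ (q - 1) = 1 := by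
    have hmul : (2 : F) ^ (q - 1) * 2 = 2 := by
      rw [← pow_succ, show q - 1 + 1 = q by omega, h2q]
    field_simp at hmul
    exact hmul
  set b := a ^ (t + 1) with hb
  have hbsq : b ^ 2 = 4 := by
    rw [hb, ← pow_mul, show (t + 1) * 2 = q + 1 by omega, h4]
  have hbval : b = 2 ∨ b = -2 := by
    have hfac : (b - 2) * (b + 2) = 0 := by linear_combination hbsq
    rcases mul_eq_zero.1 hfac with h | h
    · exact Or.inl (sub_eq_zero.1 h)
    · exact Or.inr (eq_neg_of_add_eq_zero_left h)
  have heven : Even (q - 1) := ⟨t, by omega⟩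
  have hbq1 : b ^ (q - 1) = 1 := by
    rcases hbval with h | h
    · rw [h, h2q1]
    · rw [h, Even.neg_pow heven, h2q1]
  have hdvd : q ^ 2 - 1 ∣ (t + 1) * (q - 1) := by
    rw [← ha]
    apply orderOf_dvd_of_pow_eq_one
    rw [pow_mul, ← hb, hbq1]
  have hle : q ^ 2 - 1 ≤ (t + 1) * (q - 1) :=
    Nat.le_of_dvd (Nat.mul_pos (by omega) (by omega)) hdvd
  have hkey : q ^ 2 - 1 = 2 * ((t + 1) * (q - 1)) := by
    subst ht
    have h1 : (2 * t + 1) ^ 2 = 4 * (t * t) + 4 * t + 1 := by ring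
    have h2' : (t + 1) * (2 * t + 1 - 1) = 2 * (t * t) + 2 * t := by
      rw [show 2 * t + 1 - 1 = 2 * t by omega]; ring
    generalize t * t = u at h1 h2'
    omega
  omega
end

section
/- Let q be a prime power with q > 2 and let a be a generator of the multiplicative group of F_{q^2}. Then F_p[a^3] = F_{q^2}, i.e., a^3 generates F_{q^2} as a field extension of the prime field F_p. -/
/-- If `q = p^n > 2` and `a` generates the multiplicative group of `F_{q^2}`, then
`F_p[a^3] = F_{q^2}`, i.e. `a^3` generates `F_{q^2}` over the prime field (every subfield
contains the prime field, so this is the statement that the subfield generated by `a^3`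
is all of `F_{q^2}`). -/
theorem stmt_7 (p n q : ℕ) (hp : p.Prime) (hq : q = p ^ n) (h2 : 2 < q)
    (F : Type*) [Field F] [Fintype F] [CharP F p] (hF : Fintype.card F = q ^ 2)
    (a : F) (ha : orderOf a = q ^ 2 - 1) :
    Subfield.closure {a ^ 3} = ⊤ := by
  classical
  by_contra hne
  set K := Subfield.closure {a ^ 3} with hK
  haveI : Fintype K := Fintype.ofFinite K
  have haK : a ^ 3 ∈ K := Subfield.subset_closure rfl
  -- cardinality of F is a power of card K
  obtain ⟨m, hm⟩ := VectorSpace.card_fintype K F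
  -- K is a proper subfield, so card K < card F
  have hprop : ∃ x : F, x ∉ K := by
    by_contra h
    push_neg at h
    exact hne (eq_top_iff.mpr fun y _ => h y)
  obtain ⟨x, hx⟩ := hprop
  have hlt : Fintype.card K < Fintype.card F := by
    have := Fintype.card_subtype_lt (p := fun y => y ∈ K) hx
    convert this using 2
  have h2K : 2 ≤ Fintype.card K := Fintype.one_lt_card
  -- hence m ≥ 2
  have hm2 : 2 ≤ m := by
    by_contra hm1
    push_neg at hm1
    interval_cases m <;> simp_all <;> omega
  -- so card K ≤ q
  have hKq : Fintype.card K ≤ q := by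
    have h1 : Fintype.card K ^ 2 ≤ Fintype.card K ^ m :=
      Nat.pow_le_pow_right (by omega) hm2
    rw [← hm, hF] at h1
    exact (Nat.pow_le_pow_iff_left (by norm_num)).mp h1
  -- a ≠ 0
  have ha0 : a ≠ 0 := by
    have : IsOfFinOrder a := by
      rw [← orderOf_pos_iff, ha]
      have h4 : 4 < q ^ 2 := by nlinarith
      omega
    exact this.isUnit.ne_zero
  have ha30 : a ^ 3 ≠ 0 := pow_ne_zero 3 ha0
  -- (a^3) ^ (card K - 1) = 1, since a^3 ∈ K
  have hpow : (a ^ 3) ^ (Fintype.card K - 1) = 1 := by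
    have hb : (⟨a ^ 3, haK⟩ : K) ≠ 0 := by
      intro h
      exact ha30 (Subtype.ext_iff.mp h)
    have := FiniteField.pow_card_sub_one_eq_one (⟨a ^ 3, haK⟩ : K) hb
    have := Subtype.ext_iff.mp this
    push_cast at this
    exact_mod_cast this
  have hdvd : orderOf (a ^ 3) ∣ Fintype.card K - 1 := orderOf_dvd_of_pow_eq_one hpow
  have hordle : orderOf (a ^ 3) ≤ q - 1 := by
    have := Nat.le_of_dvd (by omega) hdvd
    omega
  -- order of a^3 is (q^2-1)/gcd(q^2-1, 3)
  have hord : orderOf (a ^ 3) = (q ^ 2 - 1) / Nat.gcd (q ^ 2 - 1) 3 := by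
    rw [orderOf_pow' a (by norm_num : (3:ℕ) ≠ 0), ha]
  set g := Nat.gcd (q ^ 2 - 1) 3 with hg
  have hgdvd : g ∣ q ^ 2 - 1 := Nat.gcd_dvd_left _ _
  have hgle : g ≤ 3 := Nat.le_of_dvd (by norm_num) (Nat.gcd_dvd_right _ _)
  have hmul : orderOf (a ^ 3) * g = q ^ 2 - 1 := by
    rw [hord]; exact Nat.div_mul_cancel hgdvd
  have hgpos : 0 < g := Nat.gcd_pos_of_pos_right _ (by norm_num)
  -- contradiction: 3 * (q-1) < q^2 - 1 ≤ orderOf (a^3) * 3 ≤ (q-1)*3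
  have key : 3 * (q - 1) < q ^ 2 - 1 := by
    obtain ⟨k, rfl⟩ : ∃ k, q = k + 3 := ⟨q - 3, by omega⟩
    have : (k + 3) ^ 2 = k * k + 6 * k + 9 := by ring
    omega
  have h1 : q ^ 2 - 1 ≤ orderOf (a ^ 3) * 3 := by
    calc q ^ 2 - 1 = orderOf (a ^ 3) * g := hmul.symm
    _ ≤ orderOf (a ^ 3) * 3 := Nat.mul_le_mul_left _ hgle
  have h2' : orderOf (a ^ 3) * 3 ≤ (q - 1) * 3 := Nat.mul_le_mul_right _ hordle
  omega
end

section
/- Let q be a prime power, a ∈ F_{q^2} \ F_q with c := a^{q+1} − 4 ≠ 0, and define b = 2a − a^{2q}, d = 2a^3 + 2a^{3q} − 12a^{q+1} + 16, e = −a^{4q} + 6a^{2q+1} − a^{q+3} − 8a^q. Let J be the 6×6 matrix (1/c)·diag-block( c^2·I_4 , [[d, e],[e^q, d]] ). Then det(J) = −c^3·γ^2 where γ = a^3 + a^{3q} − 6a^{q+1} + 8. -/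
set_option maxRecDepth 8000 in
/-- The determinant of the Gram matrix `J = (1/c)·blockdiag(c² I₄, [[d, e],[eᵠ, d]])`
equals `-c³ γ²`, where `γ = a³ + a^{3q} - 6 a^{q+1} + 8`. -/
theorem stmt_13 (q : ℕ) (hq : IsPrimePow q) (F : Type*) [Field F] [Fintype F]
    (hF : Fintype.card F = q ^ 2) (a c d e γ : F) (ha : a ^ q ≠ a)
    (hc : c = a ^ (q + 1) - 4) (hc0 : c ≠ 0)
    (hd : d = 2 * a ^ 3 + 2 * a ^ (3 * q) - 12 * a ^ (q + 1) + 16)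
    (he : e = -a ^ (4 * q) + 6 * a ^ (2 * q + 1) - a ^ (q + 3) - 8 * a ^ q)
    (hγ : γ = a ^ 3 + a ^ (3 * q) - 6 * a ^ (q + 1) + 8) :
    (!![c, 0, 0, 0, 0, 0;
        0, c, 0, 0, 0, 0;
        0, 0, c, 0, 0, 0;
        0, 0, 0, c, 0, 0;
        0, 0, 0, 0, d / c, e / c;
        0, 0, 0, 0, e ^ q / c, d / c] : Matrix (Fin 6) (Fin 6) F).det
      = -c ^ 3 * γ ^ 2 := by
  obtain ⟨p, k, hp, hk, hpk⟩ := hq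
  haveI : Fact p.Prime := ⟨hp.nat_prime⟩
  -- characteristic of F is p
  haveI : CharP F (ringChar F) := ringChar.charP F
  obtain ⟨n, hpr, hcard⟩ := FiniteField.card F (ringChar F)
  have hcardq : Fintype.card F = p ^ (2 * k) := by
    rw [hF, ← hpk]; ring
  have hpe : p = ringChar F := by
    have hdvd : p ∣ ringChar F ^ (n : ℕ) := by
      rw [← hcard, hcardq]
      exact dvd_pow_self p (by positivity)
    exact ((Nat.Prime.dvd_of_dvd_pow hp.nat_prime hdvd).antisymm'
      (by
        have : ringChar F ∣ p ^ (2*k) := by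
          rw [← hcardq, hcard]; exact dvd_pow_self _ (by positivity)
        exact hpr.dvd_of_dvd_pow this)).symm
  haveI hcharp : CharP F p := hpe ▸ (ringChar.charP F)
  have hqpk : q = p ^ k := hpk.symm
  -- a^(q^2) = a
  have hy : (a ^ q) ^ q = a := by
    rw [← pow_mul, ← sq, ← hF, FiniteField.pow_card]
  -- rewrite e in terms of a and a^q
  have he2 : e = -(a ^ q) ^ 4 + 6 * a * (a ^ q) ^ 2 - a ^ 3 * a ^ q - 8 * a ^ q := by
    rw [he, show 4 * q = q * 4 by ring, show 2 * q + 1 = q * 2 + 1 by ring]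
    simp only [pow_add, pow_mul, pow_one]; ring
  -- compute e^q via the iterated Frobenius
  have hfr : ∀ x : F, iterateFrobenius F p k x = x ^ q := by
    intro x; rw [iterateFrobenius_def, hqpk]
  have he3 : e ^ q = -a ^ 4 + 6 * a ^ q * a ^ 2 - (a ^ q) ^ 3 * a - 8 * a := by
    have hfa : iterateFrobenius F p k a = a ^ q := hfr a
    have hfy : iterateFrobenius F p k (a ^ q) = a := by rw [hfr, hy]
    rw [← hfr, he2]
    simp only [map_add, map_sub, map_neg, map_mul, map_pow, map_ofNat, hfa, hfy]
  -- reduce determinant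
  have hdet :
      (!![c, 0, 0, 0, 0, 0;
        0, c, 0, 0, 0, 0;
        0, 0, c, 0, 0, 0;
        0, 0, 0, c, 0, 0;
        0, 0, 0, 0, d / c, e / c;
        0, 0, 0, 0, e ^ q / c, d / c] : Matrix (Fin 6) (Fin 6) F).det
      = c ^ 4 * (d / c * (d / c) - e / c * (e ^ q / c)) := by
    simp [Matrix.det_succ_row_zero, Fin.sum_univ_succ]
    ring
  rw [hdet, he3]
  field_simp
  rw [hc, hd, hγ, he2, mul_comm 3 q, pow_mul, pow_add, pow_one]
  ring
end

section
/- With x, y ∈ SL_6(F_{q^2}) the explicit matrices of equation (2.1) (depending on a with c = a^{q+1}−4 ≠ 0), x^2 = I and y^3 = I. -/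
/-!
Both matrices are block diagonal. For `x` the blocks are involutions. For `y`, write `β = b / c`
and `γ = b^q / c`. On `F_{q^2}` the map `u ↦ u^q` is an involutive ring automorphism, so
`b^q = 2a^q - a^2`, and from this one checks `b^2 + e = b^q c` and `d + b b^q = c^2`. Hence the
lower block of `y` is `[[β, γ - β^2, 1 - βγ], [1, -β, -γ], [0, 1, 0]]`, whose characteristic
polynomial is `X^3 - 1` for all `β, γ`; the upper block is a 3-cycle.
-/

section Generators

variable {R : Type*}

def xMatrix [Ring R] (a : R) : Matrix (Fin 6) (Fin 6) R :=
  !![1, 0, 0, 0, 0, 0;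
     0, 1, 0, 0, 0, 0;
     0, 0, 0, 1, 0, 0;
     0, 0, 1, 0, 0, 0;
     0, 0, 0, 0, -1, a;
     0, 0, 0, 0, 0, 1]

def yMatrix [Ring R] (β γ : R) : Matrix (Fin 6) (Fin 6) R :=
  !![0, 0, 1, 0, 0, 0;
     1, 0, 0, 0, 0, 0;
     0, 1, 0, 0, 0, 0;
     0, 0, 0, β, γ - β ^ 2, 1 - β * γ;
     0, 0, 0, 1, -β, -γ;
     0, 0, 0, 0, 1, 0]

theorem xMatrix_sq [Ring R] (a : R) : xMatrix a ^ 2 = 1 := by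
  rw [sq]
  ext i j
  fin_cases i <;> fin_cases j <;> simp [xMatrix, Matrix.mul_apply, Fin.sum_univ_succ]

theorem yMatrix_pow_three [CommRing R] (β γ : R) : yMatrix β γ ^ 3 = 1 := by
  rw [pow_three]
  ext i j
  fin_cases i <;> fin_cases j <;> simp [yMatrix, Matrix.mul_apply, Fin.sum_univ_succ] <;> ring

end Generators

theorem exists_ringHom_apply_eq_pow {F : Type*} [Field F] [Fintype F] {q n : ℕ}
    (hq : IsPrimePow q) (hF : Fintype.card F = q ^ n) :
    ∃ σ : F →+* F, ∀ u, σ u = u ^ q := by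
  obtain ⟨p, k, hp, -, rfl⟩ := hq
  have := Fact.mk hp.nat_prime
  have : CharP F p := charP_of_card_eq_prime_pow (f := k * n) (by rw [hF, pow_mul])
  exact ⟨iterateFrobenius F p k, fun _ => rfl⟩

theorem stmt_15_general (q : ℕ) (hq : IsPrimePow q) (F : Type*) [Field F] [Fintype F]
    (hF : Fintype.card F = q ^ 2) (a b c d e : F)
    (hb : b = 2 * a - a ^ (2 * q))
    (hc : c = a ^ (q + 1) - 4) (hc0 : c ≠ 0)
    (hd : d = 2 * a ^ 3 + 2 * a ^ (3 * q) - 12 * a ^ (q + 1) + 16)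
    (he : e = -a ^ (4 * q) + 6 * a ^ (2 * q + 1) - a ^ (q + 3) - 8 * a ^ q)
    (x y : Matrix (Fin 6) (Fin 6) F)
    (hx : x = !![1, 0, 0, 0, 0, 0;
                 0, 1, 0, 0, 0, 0;
                 0, 0, 0, 1, 0, 0;
                 0, 0, 1, 0, 0, 0;
                 0, 0, 0, 0, -1, a;
                 0, 0, 0, 0, 0, 1])
    (hy : y = !![0, 0, 1, 0, 0, 0;
                 1, 0, 0, 0, 0, 0;
                 0, 1, 0, 0, 0, 0;
                 0, 0, 0, b / c, e / c ^ 2, d / c ^ 2;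
                 0, 0, 0, 1, -(b / c), -(b ^ q / c);
                 0, 0, 0, 0, 1, 0]) :
    x ^ 2 = 1 ∧ y ^ 3 = 1 := by
  obtain ⟨σ, hσ⟩ := exists_ringHom_apply_eq_pow hq hF
  have ha_conj : (a ^ q) ^ q = a := by rw [← pow_mul, ← sq, ← hF, FiniteField.pow_card]
  have hb_conj : b ^ q = 2 * a ^ q - a ^ 2 := by
    rw [← hσ b, hb, map_sub, map_mul, map_ofNat, map_pow, hσ, mul_comm 2 q, pow_mul,
      ha_conj]
  have he' : e / c ^ 2 = b ^ q / c - (b / c) ^ 2 := by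
    field_simp
    rw [hb_conj, hb, he, hc]
    ring
  have hd' : d / c ^ 2 = 1 - b / c * (b ^ q / c) := by
    field_simp
    rw [hb_conj, hb, hd, hc]
    ring
  refine ⟨hx ▸ xMatrix_sq a, ?_⟩
  rw [hy, he', hd']
  exact yMatrix_pow_three (b / c) (b ^ q / c)

/-- The generators `x`, `y` of equation (2.1) satisfy `x² = I` and `y³ = I`. -/
theorem stmt_15 (q : ℕ) (hq : IsPrimePow q) (F : Type*) [Field F] [Fintype F]
    (hF : Fintype.card F = q ^ 2) (a b c d e : F) (ha : a ^ q ≠ a)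
    (hb : b = 2 * a - a ^ (2 * q))
    (hc : c = a ^ (q + 1) - 4) (hc0 : c ≠ 0)
    (hd : d = 2 * a ^ 3 + 2 * a ^ (3 * q) - 12 * a ^ (q + 1) + 16)
    (he : e = -a ^ (4 * q) + 6 * a ^ (2 * q + 1) - a ^ (q + 3) - 8 * a ^ q)
    (x y : Matrix (Fin 6) (Fin 6) F)
    (hx : x = !![1, 0, 0, 0, 0, 0;
                 0, 1, 0, 0, 0, 0;
                 0, 0, 0, 1, 0, 0;
                 0, 0, 1, 0, 0, 0;
                 0, 0, 0, 0, -1, a;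
                 0, 0, 0, 0, 0, 1])
    (hy : y = !![0, 0, 1, 0, 0, 0;
                 1, 0, 0, 0, 0, 0;
                 0, 1, 0, 0, 0, 0;
                 0, 0, 0, b / c, e / c ^ 2, d / c ^ 2;
                 0, 0, 0, 1, -(b / c), -(b ^ q / c);
                 0, 0, 0, 0, 1, 0]) :
    x ^ 2 = 1 ∧ y ^ 3 = 1 :=
  stmt_15_general q hq F hF a b c d e hb hc hc0 hd he x y hx hy
end

section
/- With x, y the explicit matrices of equation (2.1), the characteristic polynomial of z = xy equals t^6 − ((b+ac)/c)·t^5 − (b^q/c)·t^4 − (b/c)·t^2 − ((b^q + c·a^q)/c)·t + 1. -/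
/-!
Write `α, β, γ, δ, ε` for the entries `a, b/c, bᵠ/c, d/c², e/c²` of `x` and `y`. The product
`z = xy` is a sparse matrix whose characteristic polynomial, computed over an arbitrary
commutative ring, is `t⁶ - (α+β)t⁵ - γt⁴ - βt² + (αβ + β² + ε)t + (βγ + δ)`. Since `u ↦ uᵠ` is
an involutive automorphism of `F_{q²}`, `bᵠ = 2aᵠ - a²`, and `d`, `e` are chosen exactly so that
`βγ + δ = 1` and `αβ + β² + ε = -(γ + aᵠ)`.
-/

open Polynomial Matrix

section

variable {R : Type*} [CommRing R]

def zMatrix (α β γ δ ε : R) : Matrix (Fin 6) (Fin 6) R :=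
  !![0, 0, 1, 0, 0, 0;
     1, 0, 0, 0, 0, 0;
     0, 0, 0, β, ε, δ;
     0, 1, 0, 0, 0, 0;
     0, 0, 0, -1, α + β, γ;
     0, 0, 0, 0, 1, 0]

theorem mul_eq_zMatrix (α β γ δ ε : R) :
    !![1, 0, 0, 0, 0, 0;
       0, 1, 0, 0, 0, 0;
       0, 0, 0, 1, 0, 0;
       0, 0, 1, 0, 0, 0;
       0, 0, 0, 0, -1, α;
       0, 0, 0, 0, 0, 1] *
    !![0, 0, 1, 0, 0, 0;
       1, 0, 0, 0, 0, 0;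
       0, 1, 0, 0, 0, 0;
       0, 0, 0, β, ε, δ;
       0, 0, 0, 1, -β, -γ;
       0, 0, 0, 0, 1, 0] = zMatrix α β γ δ ε := by
  refine Matrix.ext fun i j => ?_
  fin_cases i <;> fin_cases j <;> simp [zMatrix, Matrix.mul_apply, Fin.sum_univ_six, add_comm]

theorem charpoly_zMatrix (α β γ δ ε : R) :
    (zMatrix α β γ δ ε).charpoly
      = X ^ 6 - C (α + β) * X ^ 5 - C γ * X ^ 4 - C β * X ^ 2
          + C (α * β + β ^ 2 + ε) * X + C (β * γ + δ) := by
  have hcharmatrix : charmatrix (zMatrix α β γ δ ε) =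
      !![X, 0, -1, 0, 0, 0;
         -1, X, 0, 0, 0, 0;
         0, 0, X, -C β, -C ε, -C δ;
         0, -1, 0, X, 0, 0;
         0, 0, 0, 1, X - C (α + β), -C γ;
         0, 0, 0, 0, -1, X] := by
    refine Matrix.ext fun i j => ?_
    fin_cases i <;> fin_cases j <;> simp [zMatrix]
  rw [Matrix.charpoly, hcharmatrix]
  simp [Matrix.det_succ_row_zero, Fin.sum_univ_succ, Fin.succAbove]
  ring

end

theorem FiniteField.exists_ringHom_eq_pow {F : Type*} [Field F] [Fintype F] {q k : ℕ}
    (hq : IsPrimePow q) (hF : Fintype.card F = q ^ k) : ∃ σ : F →+* F, ∀ x, σ x = x ^ q := by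
  obtain ⟨p, n, hp, -, rfl⟩ := hq
  have := Fact.mk hp.nat_prime
  have : CharP F p := charP_of_card_eq_prime_pow (f := n * k) (by rw [hF, pow_mul])
  exact ⟨iterateFrobenius F p n, fun x => iterateFrobenius_def p n x⟩

theorem stmt_16_general (q : ℕ) (hq : IsPrimePow q) (F : Type*) [Field F] [Fintype F]
    (hF : Fintype.card F = q ^ 2) (a b c d e : F)
    (hb : b = 2 * a - a ^ (2 * q))
    (hc : c = a ^ (q + 1) - 4) (hc0 : c ≠ 0)
    (hd : d = 2 * a ^ 3 + 2 * a ^ (3 * q) - 12 * a ^ (q + 1) + 16)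
    (he : e = -a ^ (4 * q) + 6 * a ^ (2 * q + 1) - a ^ (q + 3) - 8 * a ^ q)
    (x y : Matrix (Fin 6) (Fin 6) F)
    (hx : x = !![1, 0, 0, 0, 0, 0;
                 0, 1, 0, 0, 0, 0;
                 0, 0, 0, 1, 0, 0;
                 0, 0, 1, 0, 0, 0;
                 0, 0, 0, 0, -1, a;
                 0, 0, 0, 0, 0, 1])
    (hy : y = !![0, 0, 1, 0, 0, 0;
                 1, 0, 0, 0, 0, 0;
                 0, 1, 0, 0, 0, 0;
                 0, 0, 0, b / c, e / c ^ 2, d / c ^ 2;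
                 0, 0, 0, 1, -(b / c), -(b ^ q / c);
                 0, 0, 0, 0, 1, 0]) :
    (x * y).charpoly
      = X ^ 6 - C ((b + a * c) / c) * X ^ 5 - C (b ^ q / c) * X ^ 4
          - C (b / c) * X ^ 2 - C ((b ^ q + c * a ^ q) / c) * X + 1 := by
  obtain ⟨σ, hσ⟩ := FiniteField.exists_ringHom_eq_pow hq hF
  have hσσ (u : F) : σ (σ u) = u := by rw [hσ, hσ, ← pow_mul, ← sq, ← hF, FiniteField.pow_card]
  have hbq : b ^ q = 2 * a ^ q - a ^ 2 := by
    rw [← hσ, ← hσ a, hb, pow_mul', ← hσ a, map_sub, map_mul, map_ofNat, map_pow, hσσ]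
  have hcoeff₅ : a + b / c = (b + a * c) / c := by field_simp; ring
  have hcoeff₁ : a * (b / c) + (b / c) ^ 2 + e / c ^ 2 = -((b ^ q + c * a ^ q) / c) := by
    field_simp; rw [hbq, hb, hc, he]; ring
  have hcoeff₀ : b / c * (b ^ q / c) + d / c ^ 2 = 1 := by
    field_simp; rw [hbq, hb, hc, hd]; ring
  rw [hx, hy, mul_eq_zMatrix, charpoly_zMatrix, hcoeff₅, hcoeff₁, hcoeff₀, C_neg, C_1]
  ring

/-- The characteristic polynomial of `z = xy`, for the generators `x`, `y` of equation
(2.1), is `t⁶ - ((b+ac)/c) t⁵ - (bᵠ/c) t⁴ - (b/c) t² - ((bᵠ + c aᵠ)/c) t + 1`. -/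
theorem stmt_16 (q : ℕ) (hq : IsPrimePow q) (F : Type*) [Field F] [Fintype F]
    (hF : Fintype.card F = q ^ 2) (a b c d e : F) (ha : a ^ q ≠ a)
    (hb : b = 2 * a - a ^ (2 * q))
    (hc : c = a ^ (q + 1) - 4) (hc0 : c ≠ 0)
    (hd : d = 2 * a ^ 3 + 2 * a ^ (3 * q) - 12 * a ^ (q + 1) + 16)
    (he : e = -a ^ (4 * q) + 6 * a ^ (2 * q + 1) - a ^ (q + 3) - 8 * a ^ q)
    (x y : Matrix (Fin 6) (Fin 6) F)
    (hx : x = !![1, 0, 0, 0, 0, 0;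
                 0, 1, 0, 0, 0, 0;
                 0, 0, 0, 1, 0, 0;
                 0, 0, 1, 0, 0, 0;
                 0, 0, 0, 0, -1, a;
                 0, 0, 0, 0, 0, 1])
    (hy : y = !![0, 0, 1, 0, 0, 0;
                 1, 0, 0, 0, 0, 0;
                 0, 1, 0, 0, 0, 0;
                 0, 0, 0, b / c, e / c ^ 2, d / c ^ 2;
                 0, 0, 0, 1, -(b / c), -(b ^ q / c);
                 0, 0, 0, 0, 1, 0]) :
    (x * y).charpoly
      = X ^ 6 - C ((b + a * c) / c) * X ^ 5 - C (b ^ q / c) * X ^ 4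
          - C (b / c) * X ^ 2 - C ((b ^ q + c * a ^ q) / c) * X + 1 :=
  stmt_16_general q hq F hF a b c d e hb hc hc0 hd he x y hx hy
end
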